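/- Let F : ℝⁿ → ℝⁿ be a polynomial map with F(0) = 0 and j(F)(0) ≠ 0, and let G be its Segre extension. Then for every y ∈ ℝⁿ and t ≠ 0 the fiber G⁻¹({(y,t)}) is in bijection with the fiber F⁻¹({t • y}), and for every y ∈ ℝⁿ the fiber G⁻¹({(y,0)}) has exactly one element. Consequently, if every fiber of F is finite, then the supremum over all points of the cardinalities of the fibers of G equals the supremum over all points of the cardinalities of the fibers of F. -/

import Mathlib

/-!
For `t ≠ 0` the Segre extension is conjugate to `F` on the slice `{t}`: `G (x, t) = (y, t)` iff
`F (t • x) = t • y`, so `x ↦ t • x` identifies the fibres. On the slice `{0}`, continuity of `G₁`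
forces `G₁ (x, 0) = lim_{t → 0} F (t • x) / t = DF(0) x`, an invertible linear map, so those fibres
are singletons. The fibre cardinalities of `G` are therefore those of `F` together with the value
`1`, which is dominated by the cardinality of the (finite, nonempty) fibre `F⁻¹(0)`.
-/

noncomputable section

/-- A map between real coordinate spaces is a polynomial map if each component is
given by evaluation of a real polynomial. -/
def IsPolynomialMap {ι κ : Type*} (F : (ι → ℝ) → (κ → ℝ)) : Prop :=
  ∃ p : κ → MvPolynomial ι ℝ, ∀ x i, F x i = MvPolynomial.eval x (p i)

/-- The Jacobian determinant j(F)(p) = det J(F)(p) of a map at a point. -/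
def jdet {E : Type*} [NormedAddCommGroup E] [NormedSpace ℝ E] (F : E → E) (p : E) : ℝ :=
  LinearMap.det (fderiv ℝ F p : E →ₗ[ℝ] E)

open Set

lemma IsPolynomialMap.differentiable {ι κ : Type*} [Fintype ι] [Fintype κ]
    {F : (ι → ℝ) → (κ → ℝ)} (hF : IsPolynomialMap F) : Differentiable ℝ F := by
  obtain ⟨p, hp⟩ := hF
  rw [show F = fun x i => MvPolynomial.eval x (p i) from funext₂ hp]
  exact differentiable_pi.2 fun i x =>
    (AnalyticOnNhd.eval_mvPolynomial (p i) x (mem_univ x)).differentiableAt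

theorem ciSup_eq_of_range_subset_insert {α β γ : Type*} [ConditionallyCompleteLinearOrder γ]
    {f : α → γ} {g : β → γ} {c : γ} (hfg : range f ⊆ range g)
    (hgf : range g ⊆ insert c (range f)) (hc : ∃ a, c ≤ f a) :
    ⨆ b, g b = ⨆ a, f a := by
  obtain ⟨a, ha⟩ := hc
  have hf_ne : (range f).Nonempty := ⟨f a, a, rfl⟩
  by_cases hb : BddAbove (range f)
  · apply le_antisymm
    · calc sSup (range g) ≤ sSup (insert c (range f)) :=
            csSup_le_csSup (hb.insert c) (hf_ne.mono hfg) hgf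
        _ = c ⊔ sSup (range f) := csSup_insert hb hf_ne
        _ = sSup (range f) := sup_eq_right.2 (ha.trans (le_ciSup hb a))
    · exact csSup_le_csSup ((hb.insert c).mono hgf) hf_ne hfg
  · have hbg : ¬BddAbove (range g) := fun h => hb (h.mono hfg)
    rw [iSup, iSup, csSup_of_not_bddAbove hb, csSup_of_not_bddAbove hbg]

theorem eq_of_smul_eq_of_hasDerivAt {𝕜 E : Type*} [NontriviallyNormedField 𝕜]
    [NormedAddCommGroup E] [NormedSpace 𝕜 E] {f g : 𝕜 → E} {f' : E}
    (hf : HasDerivAt f f' 0) (hg : ContinuousAt g 0) (hfg : ∀ t, t • g t = f t) :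
    g 0 = f' := by
  have hslope : ∀ t ∈ ({0}ᶜ : Set 𝕜), slope f 0 t = g t := fun t ht => by
    rw [slope_def_module, ← hfg, ← hfg, zero_smul, sub_zero, sub_zero,
      inv_smul_smul₀ (mem_compl_singleton_iff.1 ht)]
  exact tendsto_nhds_unique (hg.tendsto.mono_left nhdsWithin_le_nhds)
    ((hasDerivAt_iff_tendsto_slope.1 hf).congr' (eventually_nhdsWithin_of_forall hslope))

def segreExtension {𝕜 : Type*} {n : ℕ} (G₁ : (Fin (n + 1) → 𝕜) → (Fin n → 𝕜))
    (v : Fin (n + 1) → 𝕜) : Fin (n + 1) → 𝕜 :=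
  Fin.snoc (G₁ v) (v (Fin.last n))

@[simp]
lemma segreExtension_snoc {𝕜 : Type*} {n : ℕ} {G₁ : (Fin (n + 1) → 𝕜) → (Fin n → 𝕜)}
    (x : Fin n → 𝕜) (t : 𝕜) :
    segreExtension G₁ (Fin.snoc x t) = Fin.snoc (G₁ (Fin.snoc x t)) t := by
  simp [segreExtension]

section Field

variable {𝕜 : Type*} [Field 𝕜] {n : ℕ} {F : (Fin n → 𝕜) → (Fin n → 𝕜)}
  {G₁ : (Fin (n + 1) → 𝕜) → (Fin n → 𝕜)}

lemma segreExtension_snoc_eq_snoc_iff (hG₁F : ∀ x t, t • G₁ (Fin.snoc x t) = F (t • x))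
    {x y : Fin n → 𝕜} {s t : 𝕜} (ht : t ≠ 0) :
    segreExtension G₁ (Fin.snoc x s) = Fin.snoc y t ↔ s = t ∧ F (t • x) = t • y := by
  rw [segreExtension_snoc, Fin.snoc_inj, and_comm]
  refine and_congr_right fun hs => ?_
  rw [hs, ← smul_right_inj ht, hG₁F]

lemma bijOn_snoc_inv_smul_fiber (hG₁F : ∀ x t, t • G₁ (Fin.snoc x t) = F (t • x))
    {y : Fin n → 𝕜} {t : 𝕜} (ht : t ≠ 0) :
    BijOn (fun z => Fin.snoc (t⁻¹ • z) t) (F ⁻¹' {t • y})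
      (segreExtension G₁ ⁻¹' {Fin.snoc y t}) := by
  refine ⟨fun z hz => ?_, fun z _ z' _ h => ?_, fun v hv => ?_⟩
  · rw [mem_preimage, mem_singleton_iff, segreExtension_snoc_eq_snoc_iff hG₁F ht,
      smul_inv_smul₀ ht]
    exact ⟨rfl, hz⟩
  · exact smul_right_injective _ (inv_ne_zero ht) (Fin.snoc_injective2 h).1
  · induction v using Fin.snocCases with
    | snoc x s =>
      obtain ⟨rfl, hx⟩ := (segreExtension_snoc_eq_snoc_iff hG₁F ht).1 hv
      exact ⟨s • x, hx, by simp [inv_smul_smul₀ ht]⟩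

lemma card_segreExtension_fiber (hG₁F : ∀ x t, t • G₁ (Fin.snoc x t) = F (t • x))
    (y : Fin n → 𝕜) {t : 𝕜} (ht : t ≠ 0) :
    Nat.card (segreExtension G₁ ⁻¹' {Fin.snoc y t}) = Nat.card (F ⁻¹' {t • y}) :=
  (Nat.card_congr ((bijOn_snoc_inv_smul_fiber hG₁F ht).equiv _)).symm

end Field

section Normed

variable {𝕜 : Type*} [NontriviallyNormedField 𝕜] {n : ℕ} {F : (Fin n → 𝕜) → (Fin n → 𝕜)}
  {G₁ : (Fin (n + 1) → 𝕜) → (Fin n → 𝕜)}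

lemma apply_snoc_zero_eq_fderiv (hF : DifferentiableAt 𝕜 F 0) (hG₁ : Continuous G₁)
    (hG₁F : ∀ x t, t • G₁ (Fin.snoc x t) = F (t • x)) (x : Fin n → 𝕜) :
    G₁ (Fin.snoc x 0) = fderiv 𝕜 F 0 x := by
  refine eq_of_smul_eq_of_hasDerivAt (f := fun t => F (t • x)) ?_ ?_ (hG₁F x)
  · have hsmul : HasDerivAt (fun t : 𝕜 => t • x) x 0 := by
      simpa using (hasDerivAt_id (0 : 𝕜)).smul_const x
    exact hF.hasFDerivAt.comp_hasDerivAt_of_eq 0 hsmul (zero_smul 𝕜 x).symm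
  · exact (hG₁.comp (by fun_prop)).continuousAt

lemma existsUnique_segreExtension_eq_snoc_zero (hF : DifferentiableAt 𝕜 F 0)
    (hG₁ : Continuous G₁) (hG₁F : ∀ x t, t • G₁ (Fin.snoc x t) = F (t • x))
    (hdet : LinearMap.det (fderiv 𝕜 F 0 : (Fin n → 𝕜) →ₗ[𝕜] (Fin n → 𝕜)) ≠ 0)
    (y : Fin n → 𝕜) : ∃! v, segreExtension G₁ v = Fin.snoc y 0 := by
  set e := LinearMap.equivOfDetNeZero _ hdet
  have key : ∀ x s, segreExtension G₁ (Fin.snoc x s) = Fin.snoc y 0 ↔ s = 0 ∧ e x = y := by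
    intro x s
    rw [segreExtension_snoc, Fin.snoc_inj, and_comm]
    refine and_congr_right fun hs => ?_
    rw [hs, apply_snoc_zero_eq_fderiv hF hG₁ hG₁F]
    rfl
  refine ⟨Fin.snoc (e.symm y) 0, (key _ _).2 ⟨rfl, e.apply_symm_apply y⟩, fun v hv => ?_⟩
  induction v using Fin.snocCases with
  | snoc x s =>
    obtain ⟨rfl, rfl⟩ := (key x s).1 hv
    rw [e.symm_apply_apply]

end Normed

/-- let F : ℝⁿ → ℝⁿ be a polynomial map with F(0) = 0 and j(F)(0) ≠ 0,
and let G be its Segre extension. For t ≠ 0 the fiber of G over (y,t) is in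
bijection with the fiber of F over t • y, and the fiber of G over (y,0) is a
singleton. Hence if all fibers of F are finite, the supremum of the fiber
cardinalities of G equals that of F.
(ℝⁿ × ℝ is modelled as Fin (n+1) → ℝ via Fin.snoc.) -/
theorem stmt7 (n : ℕ) (F : (Fin n → ℝ) → (Fin n → ℝ))
    (hF : IsPolynomialMap F) (h0 : F 0 = 0) (hj0 : jdet F 0 ≠ 0)
    (G₁ : (Fin (n + 1) → ℝ) → (Fin n → ℝ)) (hG₁ : IsPolynomialMap G₁)
    (hG₁F : ∀ v : Fin (n + 1) → ℝ,
      v (Fin.last n) • G₁ v = F (v (Fin.last n) • (v ∘ Fin.castSucc)))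
    (G : (Fin (n + 1) → ℝ) → (Fin (n + 1) → ℝ))
    (hG : ∀ v, G v = Fin.snoc (G₁ v) (v (Fin.last n))) :
    (∀ (y : Fin n → ℝ) (t : ℝ), t ≠ 0 →
      Nonempty ((G ⁻¹' {Fin.snoc y t}) ≃ (F ⁻¹' {t • y}))) ∧
    (∀ y : Fin n → ℝ, ∃! v, G v = Fin.snoc y 0) ∧
    ((∀ y, (F ⁻¹' {y}).Finite) →
      (⨆ w : Fin (n + 1) → ℝ, Nat.card (G ⁻¹' {w})) =
        ⨆ y : Fin n → ℝ, Nat.card (F ⁻¹' {y})) := by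
  obtain rfl : G = segreExtension G₁ := funext hG
  have hlift : ∀ x t, t • G₁ (Fin.snoc x t) = F (t • x) := fun x t => by
    simpa using hG₁F (Fin.snoc x t)
  have hunique := existsUnique_segreExtension_eq_snoc_zero hF.differentiable.differentiableAt
    hG₁.differentiable.continuous hlift hj0
  refine ⟨fun y t ht => ⟨((bijOn_snoc_inv_smul_fiber hlift ht).equiv _).symm⟩, hunique,
    fun hfin => ciSup_eq_of_range_subset_insert (c := 1) ?_ ?_ ⟨0, ?_⟩⟩
  · rintro _ ⟨y, rfl⟩
    exact ⟨Fin.snoc y 1, by simpa using card_segreExtension_fiber hlift y one_ne_zero⟩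
  · rintro _ ⟨w, rfl⟩
    induction w using Fin.snocCases with
    | snoc y t =>
      rcases eq_or_ne t 0 with rfl | ht
      · obtain ⟨v, hv, hv_unique⟩ := hunique y
        exact .inl (Nat.card_eq_one_iff_exists.2 ⟨⟨v, hv⟩, fun w => Subtype.ext (hv_unique w w.2)⟩)
      · exact .inr ⟨t • y, (card_segreExtension_fiber hlift y ht).symm⟩
  · have : Finite (F ⁻¹' {0}) := (hfin 0).to_subtype
    have : Nonempty (F ⁻¹' {0}) := ⟨⟨0, h0⟩⟩
    exact Nat.card_pos
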